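/- Let N be a natural number and define Enc(x, r) = (1 + N)^x · r^N in ZMod (N^2) for a plaintext x : ℕ and randomness r : ZMod (N^2). Then for every finite index type ι, every plaintext vector v : ι → ℕ, every plaintext vector x : ι → ℕ, and every randomness vector r : ι → ZMod (N^2), one has ∏_{i ∈ ι} Enc(v i, r i)^{x i} = Enc((∑_{i ∈ ι} x i · v i) mod N, ∏_{i ∈ ι} (r i)^{x i}). (Homomorphic dot product, Eqn (3) of the paper.) -/
import Mathlib


/-- Paillier-style encryption of plaintext `x` with randomness `r`, in `ZMod (N^2)`. -/
def Enc (N : ℕ) (x : ℕ) (r : ZMod (N ^ 2)) : ZMod (N ^ 2) :=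
  ((1 : ZMod (N ^ 2)) + (N : ZMod (N ^ 2))) ^ x * r ^ N

lemma one_add_sq_zero_pow {R : Type*} [CommRing R] (t : R) (ht : t ^ 2 = 0) (n : ℕ) :
    (1 + t) ^ n = 1 + n * t := by
  induction n with
  | zero => simp
  | succ n ih =>
      rw [pow_succ, ih]
      ring_nf
      rw [ht]
      push_cast
      ring

lemma one_add_N_pow_N (N : ℕ) :
    ((1 : ZMod (N ^ 2)) + (N : ZMod (N ^ 2))) ^ N = 1 := by
  have ht : (N : ZMod (N ^ 2)) ^ 2 = 0 := by
    rw [← Nat.cast_pow, ZMod.natCast_self]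
  rw [one_add_sq_zero_pow _ ht, ← Nat.cast_pow] at *
  simp [ZMod.natCast_self, ← sq]
  rw [← Nat.cast_pow, ZMod.natCast_self]

lemma one_add_N_pow_mod (N a : ℕ) :
    ((1 : ZMod (N ^ 2)) + (N : ZMod (N ^ 2))) ^ a
      = ((1 : ZMod (N ^ 2)) + (N : ZMod (N ^ 2))) ^ (a % N) := by
  conv_lhs => rw [← Nat.div_add_mod a N]
  rw [pow_add, pow_mul, one_add_N_pow_N, one_pow, one_mul]

theorem paillier_homomorphic_dot_product (N : ℕ) (ι : Type*) [Fintype ι]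
    (v x : ι → ℕ) (r : ι → ZMod (N ^ 2)) :
    ∏ i, Enc N (v i) (r i) ^ x i
      = Enc N ((∑ i, x i * v i) % N) (∏ i, r i ^ x i) := by
  unfold Enc
  rw [← one_add_N_pow_mod]
  simp_rw [mul_pow, ← pow_mul, Finset.prod_mul_distrib]
  rw [Finset.prod_pow_eq_pow_sum, ← Finset.prod_pow]
  congr 1
  · exact congrArg _ (Finset.sum_congr rfl fun i _ => mul_comm _ _)
  · exact Finset.prod_congr rfl fun i _ => by rw [mul_comm, pow_mul]
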